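/- arXiv:2010.15522 — 2 statements merged into one kernel-verified Lean document; each statement's English description precedes it below -/
import Mathlib

section
/- Let T be a tree, v a non-leaf cut configuration given by an edge vw, and B the component of T − vw containing v (rooted at v). If a is the number of subtrees of T − B containing w and b is the number of subtrees of B containing v, then the number of subtrees of T containing v equals (a+1)·b, and the total number of subtrees of T is at least (a+1)(b+1). -/
open scoped Classical

/-- The subtrees (nonempty connected induced subgraphs) of a graph, as vertex sets. -/
noncomputable def subtrees {V : Type*} [Fintype V] (G : SimpleGraph V) :
    Finset (Finset V) :=
  Finset.univ.filter (fun s => s.Nonempty ∧ (G.induce (s : Set V)).Connected)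

/-- The subtrees of a graph containing a fixed vertex `r`. -/
noncomputable def subtreesThrough {V : Type*} [Fintype V] (G : SimpleGraph V) (r : V) :
    Finset (Finset V) :=
  Finset.univ.filter (fun s => r ∈ s ∧ (G.induce (s : Set V)).Connected)

/-- The side of the edge `vw` containing `v`: the vertices whose every walk to `w`
passes through `v` (the component of `T − vw` containing `v`). -/
def edgeSide {V : Type*} (G : SimpleGraph V) (v w : V) : Set V :=
  {x | ∀ p : G.Walk x w, v ∈ p.support}

/-! In a tree the edge `vw` is a bridge, so it is the only edge between the side `B ∋ v` and
its complement. Hence a trail with both ends on one side stays on that side, and a connected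
set meets each side in a connected set. Cutting a subtree through `v` along `B` thus yields a
subtree of `B` through `v` together with either nothing or a subtree of `T − B` through `w`;
gluing along `vw` inverts this, giving `(a + 1) b`. For the total, add the `a` subtrees of
`T − B` through `w` and a singleton `{u}` with `u ≠ v, w`: `(a + 1) b + a + 1 = (a + 1)(b + 1)`.
-/

namespace SimpleGraph

variable {V : Type*} {G : SimpleGraph V}

lemma exists_walk_of_preconnected_induce {S : Set V} (hS : (G.induce S).Preconnected)
    {x y : V} (hx : x ∈ S) (hy : y ∈ S) : ∃ p : G.Walk x y, ∀ z ∈ p.support, z ∈ S := by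
  obtain ⟨q⟩ := hS ⟨x, hx⟩ ⟨y, hy⟩
  refine ⟨q.map (Embedding.induce S).toHom, fun z hz => ?_⟩
  obtain ⟨z', -, rfl⟩ := List.mem_map.mp (Walk.support_map _ _ ▸ hz)
  exact z'.2

def IsOnlyBoundaryEdge (G : SimpleGraph V) (B : Set V) (e : Sym2 V) : Prop :=
  ∀ ⦃x y⦄, G.Adj x y → x ∈ B → y ∉ B → s(x, y) = e

namespace IsOnlyBoundaryEdge

variable {B : Set V} {e : Sym2 V}

lemma compl (h : G.IsOnlyBoundaryEdge B e) : G.IsOnlyBoundaryEdge Bᶜ e := by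
  intro x y hxy hx hy
  rw [Sym2.eq_swap]
  exact h hxy.symm (Set.not_notMem.mp hy) hx

lemma mem_edges (h : G.IsOnlyBoundaryEdge B e) {x y : V} (p : G.Walk x y)
    (hx : x ∈ B) (hy : y ∉ B) : e ∈ p.edges := by
  obtain ⟨d, hd, hfst, hsnd⟩ := p.exists_boundary_dart B hx hy
  rw [p.edges_eq_map_darts, ← h d.adj hfst hsnd]
  exact List.mem_map_of_mem hd

lemma mem_of_isTrail (h : G.IsOnlyBoundaryEdge B e) {x y : V} {p : G.Walk x y}
    (hp : p.IsTrail) (hx : x ∈ B) (hy : y ∈ B) {z : V} (hz : z ∈ p.support) : z ∈ B := by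
  by_contra hzB
  -- leaving `B` and coming back would use the edge `e` twice
  exact hp.disjoint_edges_takeUntil_dropUntil hz
    (h.mem_edges _ hx hzB) (h.compl.mem_edges _ hzB (Set.not_notMem.mpr hy))

lemma connected_induce_inter (h : G.IsOnlyBoundaryEdge B e) {S : Set V}
    (hS : (G.induce S).Connected) (hne : (S ∩ B).Nonempty) :
    (G.induce (S ∩ B)).Connected := by
  have := hne.to_subtype
  refine .mk ?_
  rintro ⟨x, hxS, hxB⟩ ⟨y, hyS, hyB⟩
  obtain ⟨p, hpS⟩ := exists_walk_of_preconnected_induce hS.preconnected hxS hyS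
  exact (p.bypass.induce (S ∩ B) fun z hz => ⟨hpS z (p.support_bypass_subset_support hz),
    h.mem_of_isTrail p.bypass_isPath.isTrail hxB hyB hz⟩).reachable

lemma snd_mem_of_connected_induce {v w : V} (h : G.IsOnlyBoundaryEdge B s(v, w)) {S : Set V}
    (hS : (G.induce S).Connected) {x y : V} (hx : x ∈ S ∩ B) (hy : y ∈ S \ B) : w ∈ S := by
  obtain ⟨p, hpS⟩ := exists_walk_of_preconnected_induce hS.preconnected hx.1 hy.1
  exact hpS w (p.snd_mem_support_of_mem_edges (h.mem_edges p hx.2 hy.2))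

end IsOnlyBoundaryEdge

end SimpleGraph

open SimpleGraph

lemma mem_edgeSide_left {V : Type*} (G : SimpleGraph V) (v w : V) : v ∈ edgeSide G v w :=
  fun p => p.start_mem_support

lemma right_notMem_edgeSide {V : Type*} (G : SimpleGraph V) {v w : V} (hvw : v ≠ w) :
    w ∉ edgeSide G v w :=
  fun h => hvw (by simpa using h .nil)

lemma isOnlyBoundaryEdge_edgeSide {V : Type*} {G : SimpleGraph V} (hG : G.IsAcyclic) {v w : V}
    (hvw : G.Adj v w) : G.IsOnlyBoundaryEdge (edgeSide G v w) s(v, w) := by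
  intro x y hxy hx hy
  obtain ⟨p, hvp⟩ : ∃ p : G.Walk y w, v ∉ p.support := by simpa [edgeSide] using hy
  obtain rfl : x = v := by simpa [hvp, eq_comm] using hx (p.cons hxy)
  have hmem := isBridge_iff_forall_walk_mem_edges.mp (isAcyclic_iff_forall_adj_isBridge.mp hG hvw)
    (p.cons hxy)
  rw [Walk.edges_cons, List.mem_cons] at hmem
  exact (hmem.resolve_right fun he => hvp (p.fst_mem_support_of_mem_edges he)).symm

noncomputable def subtreesThroughWithin {V : Type*} [Fintype V] (G : SimpleGraph V) (r : V)
    (S : Set V) : Finset (Finset V) :=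
  Finset.univ.filter (fun s => r ∈ s ∧ (s : Set V) ⊆ S ∧ (G.induce (s : Set V)).Connected)

open Finset

section Counting

variable {V : Type*} [Fintype V] {G : SimpleGraph V} {s t : Finset V}

lemma mem_subtrees : s ∈ subtrees G ↔ s.Nonempty ∧ (G.induce (s : Set V)).Connected := by
  simp [subtrees]

lemma mem_subtreesThrough {r : V} :
    s ∈ subtreesThrough G r ↔ r ∈ s ∧ (G.induce (s : Set V)).Connected := by
  simp [subtreesThrough]

lemma mem_subtreesThroughWithin {r : V} {S : Set V} :
    s ∈ subtreesThroughWithin G r S ↔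
      r ∈ s ∧ (s : Set V) ⊆ S ∧ (G.induce (s : Set V)).Connected := by
  simp [subtreesThroughWithin]

variable {B : Set V} {v w : V}

lemma filter_mem_mem_subtreesThroughWithin (h : G.IsOnlyBoundaryEdge B s(v, w)) (hvB : v ∈ B)
    (hs : s ∈ subtreesThrough G v) : s.filter (· ∈ B) ∈ subtreesThroughWithin G v B := by
  rw [mem_subtreesThrough] at hs
  rw [mem_subtreesThroughWithin, coe_filter]
  exact ⟨mem_filter.mpr ⟨hs.1, hvB⟩, fun x hx => hx.2,
    h.connected_induce_inter hs.2 ⟨v, hs.1, hvB⟩⟩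

lemma filter_notMem_mem_insert_empty (h : G.IsOnlyBoundaryEdge B s(v, w)) (hvB : v ∈ B)
    (hwB : w ∉ B) (hs : s ∈ subtreesThrough G v) :
    s.filter (· ∉ B) ∈ insert ∅ (subtreesThroughWithin G w Bᶜ) := by
  rw [mem_subtreesThrough] at hs
  rcases (s.filter (· ∉ B)).eq_empty_or_nonempty with hempty | ⟨x, hx⟩
  · exact hempty ▸ mem_insert_self _ _
  rw [mem_filter] at hx
  refine mem_insert_of_mem (mem_subtreesThroughWithin.mpr ⟨?_, fun y hy => ?_, ?_⟩)
  · exact mem_filter.mpr ⟨h.snd_mem_of_connected_induce hs.2 ⟨hs.1, hvB⟩ hx, hwB⟩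
  · exact (mem_filter.mp hy).2
  · rw [coe_filter]
    exact h.compl.connected_induce_inter hs.2 ⟨x, hx⟩

lemma union_mem_subtreesThrough (hvw : G.Adj v w)
    (hs : s ∈ insert ∅ (subtreesThroughWithin G w Bᶜ)) (ht : t ∈ subtreesThroughWithin G v B) :
    s ∪ t ∈ subtreesThrough G v := by
  rw [mem_subtreesThroughWithin] at ht
  rcases mem_insert.mp hs with rfl | hs
  · simpa [mem_subtreesThrough] using ⟨ht.1, ht.2.2⟩
  rw [mem_subtreesThroughWithin] at hs
  refine mem_subtreesThrough.mpr ⟨mem_union_right _ ht.1, ?_⟩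
  rw [coe_union, Set.union_comm]
  exact connected_induce_union ht.2.2.preconnected hs.2.2.preconnected ht.1 hs.1 hvw

theorem card_subtreesThrough_eq_mul (h : G.IsOnlyBoundaryEdge B s(v, w)) (hvB : v ∈ B)
    (hwB : w ∉ B) (hvw : G.Adj v w) :
    #(subtreesThrough G v) =
      (#(subtreesThroughWithin G w Bᶜ) + 1) * #(subtreesThroughWithin G v B) := by
  have hempty : ∅ ∉ subtreesThroughWithin G w Bᶜ := by simp [mem_subtreesThroughWithin]
  rw [← card_insert_of_notMem hempty, ← card_product]
  refine card_nbij' (fun s => (s.filter (· ∉ B), s.filter (· ∈ B))) (fun p => p.1 ∪ p.2)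
    (fun s hs => mem_product.mpr ⟨filter_notMem_mem_insert_empty h hvB hwB hs,
      filter_mem_mem_subtreesThroughWithin h hvB hs⟩)
    (fun p hp => union_mem_subtreesThrough hvw (mem_product.mp hp).1 (mem_product.mp hp).2)
    (fun s _ => by dsimp only; rw [union_comm, filter_union_filter_not_eq]) ?_
  rintro ⟨s, t⟩ hst
  obtain ⟨hs, ht⟩ := mem_product.mp hst
  have hsB : ∀ x ∈ s, x ∉ B := by
    rcases mem_insert.mp hs with rfl | hs
    · simp
    · exact fun x hx => (mem_subtreesThroughWithin.mp hs).2.1 hx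
  have htB : ∀ x ∈ t, x ∈ B := fun x hx => (mem_subtreesThroughWithin.mp ht).2.1 hx
  ext x <;> simp only [mem_filter, mem_union] <;> grind

lemma card_subtreesThrough_add_le (hvB : v ∈ B) {u : V} (huv : u ≠ v) (huw : u ≠ w) :
    #(subtreesThrough G v) + (#(subtreesThroughWithin G w Bᶜ) + 1) ≤ #(subtrees G) := by
  have hu : {u} ∉ subtreesThroughWithin G w Bᶜ := by
    simp [mem_subtreesThroughWithin, huw.symm]
  rw [← card_insert_of_notMem hu, ← card_union_of_disjoint]
  · refine card_le_card fun s hs => ?_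
    rcases mem_union.mp hs with hs | hs
    · obtain ⟨hv, hconn⟩ := mem_subtreesThrough.mp hs
      exact mem_subtrees.mpr ⟨⟨v, hv⟩, hconn⟩
    rcases mem_insert.mp hs with rfl | hs
    · exact mem_subtrees.mpr ⟨singleton_nonempty u, by
      rw [coe_singleton, induce_singleton_eq_top]; exact connected_top⟩
    · obtain ⟨hw, -, hconn⟩ := mem_subtreesThroughWithin.mp hs
      exact mem_subtrees.mpr ⟨⟨w, hw⟩, hconn⟩
  · refine disjoint_left.mpr fun s hs hs' => ?_
    have hv := (mem_subtreesThrough.mp hs).1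
    rcases mem_insert.mp hs' with rfl | hs'
    · exact huv (mem_singleton.mp hv).symm
    · exact (mem_subtreesThroughWithin.mp hs').2.1 hv hvB

end Counting

/-- Let `T` be a tree with at least 3 vertices, `vw` an edge, and `B` the component of
`T − vw` containing `v`. If `a` is the number of subtrees of `T − B` containing `w` and
`b` is the number of subtrees of `B` containing `v`, then the number of subtrees of `T`
containing `v` equals `(a+1)·b`, and `T` has at least `(a+1)(b+1)` subtrees in total. -/
theorem stmt18 {V : Type*} [Fintype V] (G : SimpleGraph V) (hG : G.IsTree)
    (h3 : 3 ≤ Fintype.card V) (v w : V) (hvw : G.Adj v w) (a b : ℕ)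
    (ha : a = (Finset.univ.filter (fun s : Finset V => w ∈ s ∧
      (s : Set V) ⊆ (edgeSide G v w)ᶜ ∧ (G.induce (s : Set V)).Connected)).card)
    (hb : b = (Finset.univ.filter (fun s : Finset V => v ∈ s ∧
      (s : Set V) ⊆ edgeSide G v w ∧ (G.induce (s : Set V)).Connected)).card) :
    (subtreesThrough G v).card = (a + 1) * b ∧
    (a + 1) * (b + 1) ≤ (subtrees G).card := by
  have hcut := isOnlyBoundaryEdge_edgeSide hG.isAcyclic hvw
  have hvB := mem_edgeSide_left G v w
  have hcard : #(subtreesThrough G v) = (a + 1) * b := by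
    rw [ha, hb]
    exact card_subtreesThrough_eq_mul hcut hvB (right_notMem_edgeSide G hvw.ne) hvw
  obtain ⟨u, -, hu⟩ := exists_mem_notMem_of_card_lt_card (s := {v, w}) (t := univ)
    (card_le_two.trans_lt (by rwa [card_univ]))
  simp only [mem_insert, mem_singleton, not_or] at hu
  have hle : #(subtreesThrough G v) + (a + 1) ≤ #(subtrees G) := by
    rw [ha]
    exact card_subtreesThrough_add_le hvB hu.1 hu.2
  exact ⟨hcard, by linarith⟩
end

section
/- The 1-periodic function f defined by f(x) = x − 2^x for x ∈ [0,1] (extended periodically) satisfies: for every integer n ≥ 2, min over positive integers b of (b + n²/2^b) = 2·log₂ n − f(2·log₂ n). -/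
/-!
Consecutive values of `g b = b + c / 2 ^ b` differ by `g (b + 1) - g b = 1 - c / 2 ^ (b + 1)`,
so `g` decreases while `2 ^ (b + 1) ≤ c` and increases afterwards: over `ℕ` it is minimal at
`m = ⌊log₂ c⌋`. For `c = n²` and `x = log₂ c = 2 log₂ n`, periodicity gives
`x - f x = ⌊x⌋ + 2 ^ (x - ⌊x⌋) = m + c / 2 ^ m`, which is that minimum.
-/

open Real

lemma add_div_two_pow_succ_sub (c : ℝ) (b : ℕ) :
    ((b + 1 : ℕ) + c / 2 ^ (b + 1)) - (b + c / 2 ^ b) = 1 - c / 2 ^ (b + 1) := by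
  push_cast
  field_simp
  ring

lemma add_div_two_pow_le_succ {c : ℝ} {b : ℕ} (hc : c ≤ 2 ^ (b + 1)) :
    (b + c / 2 ^ b : ℝ) ≤ (b + 1 : ℕ) + c / 2 ^ (b + 1) := by
  have := add_div_two_pow_succ_sub c b
  have : c / 2 ^ (b + 1) ≤ 1 := (div_le_one (by positivity)).2 hc
  linarith

lemma add_div_two_pow_succ_le {c : ℝ} {b : ℕ} (hc : 2 ^ (b + 1) ≤ c) :
    ((b + 1 : ℕ) + c / 2 ^ (b + 1) : ℝ) ≤ b + c / 2 ^ b := by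
  have := add_div_two_pow_succ_sub c b
  have : 1 ≤ c / 2 ^ (b + 1) := (one_le_div (by positivity)).2 hc
  linarith

lemma add_div_two_pow_le_of_pow_le_of_lt {c : ℝ} {m : ℕ} (hlo : 2 ^ m ≤ c)
    (hhi : c < 2 ^ (m + 1)) (b : ℕ) : (m + c / 2 ^ m : ℝ) ≤ b + c / 2 ^ b := by
  rcases le_total b m with hbm | hmb
  · refine antitoneOn_of_add_one_le (f := fun k : ℕ ↦ (k + c / 2 ^ k : ℝ)) Set.ordConnected_Iic
      (fun k _ _ hk => add_div_two_pow_succ_le ?_) hbm Set.self_mem_Iic hbm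
    exact (pow_le_pow_right₀ one_le_two hk).trans hlo
  · refine monotoneOn_of_le_add_one (f := fun k : ℕ ↦ (k + c / 2 ^ k : ℝ)) Set.ordConnected_Ici
      (fun k _ hk _ => add_div_two_pow_le_succ ?_) Set.self_mem_Ici hmb hmb
    exact hhi.le.trans (pow_le_pow_right₀ one_le_two (Nat.succ_le_succ hk))

lemma sub_eq_natFloor_add_rpow {a : ℝ} {f : ℝ → ℝ} (hper : Function.Periodic f 1)
    (hf : ∀ x ∈ Set.Icc (0 : ℝ) 1, f x = x - a ^ x) {x : ℝ} (hx : 0 ≤ x) :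
    x - f x = ⌊x⌋₊ + a ^ (x - ⌊x⌋₊) := by
  have hfract : x - ⌊x⌋₊ ∈ Set.Icc (0 : ℝ) 1 :=
    ⟨sub_nonneg.2 (Nat.floor_le hx), by linarith [Nat.lt_floor_add_one x]⟩
  rw [← hper.sub_nat_mul_eq ⌊x⌋₊, mul_one, hf _ hfract]
  ring

/-- Let `f` be the 1-periodic function with `f x = x − 2^x` on `[0,1]`. For every
integer `n ≥ 2`, the minimum over positive integers `b` of `b + n²/2^b` equals
`2·log₂ n − f(2·log₂ n)` (and is attained). -/
theorem stmt19 (f : ℝ → ℝ) (hper : ∀ x, f (x + 1) = f x)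
    (hf : ∀ x ∈ Set.Icc (0 : ℝ) 1, f x = x - 2 ^ x)
    (n : ℕ) (hn : 2 ≤ n) :
    IsLeast {y : ℝ | ∃ b : ℕ, 0 < b ∧ y = (b : ℝ) + (n : ℝ) ^ 2 / 2 ^ b}
      (2 * Real.logb 2 n - f (2 * Real.logb 2 n)) := by
  set m := Nat.log 2 (n ^ 2)
  have hn2 : 2 ≤ n ^ 2 := hn.trans (Nat.le_self_pow two_ne_zero n)
  have hlog : 2 * logb 2 n = logb (2 : ℕ) (n ^ 2 : ℕ) := by
    push_cast
    rw [logb_pow]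
    ring
  have hpow : (2 : ℝ) ^ (logb (2 : ℕ) (n ^ 2 : ℕ) - m) = n ^ 2 / 2 ^ m := by
    push_cast
    rw [rpow_sub two_pos, rpow_logb two_pos (by norm_num) (by positivity), rpow_natCast]
  have hlog_nonneg : 0 ≤ logb (2 : ℕ) (n ^ 2 : ℕ) :=
    logb_nonneg (by norm_num) (by exact_mod_cast one_le_two.trans hn2)
  rw [hlog, sub_eq_natFloor_add_rpow hper hf hlog_nonneg, natFloor_logb_natCast, hpow]
  refine ⟨⟨m, Nat.log_pos one_lt_two hn2, rfl⟩, ?_⟩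
  rintro _ ⟨b, -, rfl⟩
  exact add_div_two_pow_le_of_pow_le_of_lt
    (by exact_mod_cast Nat.pow_log_le_self 2 (by positivity))
    (by exact_mod_cast Nat.lt_pow_succ_log_self one_lt_two _) b
end
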